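/- Let d ≥ 2 and let μ_H be the normalized Haar probability measure on the unitary group U(d). Then for any fixed row index i and distinct column indices j₁ ≠ j₂ in Fin d, ∫ |U_{i j₁}|² · |U_{i j₂}|² dμ_H(U) = 1/( d (d + 1) ); and likewise for any fixed column index j and distinct row indices i₁ ≠ i₂, ∫ |U_{i₁ j}|² · |U_{i₂ j}|² dμ_H(U) = 1/( d (d + 1) ). -/

import Mathlib

/-!
Left multiplication by the unitary `givens p q c (c * I ^ k)`, `c = (1 + I) / 2`, preserves Haar
measure and replaces the entry `U p j` by `c (U p j + I ^ k U q j)`. Averaging the fourth power of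
its modulus over `k = 0, 1, 2, 3` cancels the cross terms, leaving
`3 E|U_pj|⁴ = E|U_qj|⁴ + 4 E|U_pj|²|U_qj|²` for `p ≠ q`. Hence all `E|U_aj|⁴` agree and equal
`2 E|U_aj|²|U_bj|²` for `a ≠ b`; integrating `(∑ a, |U_aj|²)² = 1` then gives
`d (d + 1) E|U_pj|²|U_qj|² = 1`. Rows reduce to columns because a compact group is unimodular, so
Haar measure is invariant under `U ↦ U⁻¹ = Uᴴ`.
-/

open MeasureTheory Matrix

noncomputable instance unitaryGroupMeasurableSpace {n : Type*} [Fintype n] [DecidableEq n] :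
    MeasurableSpace (Matrix.unitaryGroup n ℂ) := borel _

namespace MeasureTheory.Measure

variable {G : Type*} [Group G] [TopologicalSpace G] [IsTopologicalGroup G] [LocallyCompactSpace G]
  [MeasurableSpace G] [BorelSpace G] (μ : Measure G) [μ.IsHaarMeasure] [IsProbabilityMeasure μ]

theorem isMulRightInvariant_of_isProbabilityMeasure : μ.IsMulRightInvariant where
  map_mul_right_eq_self g :=
    have := isProbabilityMeasure_map (μ := μ) (measurable_mul_const g).aemeasurable
    isHaarMeasure_eq_of_isProbabilityMeasure _ μ

theorem isInvInvariant_of_isProbabilityMeasure : μ.IsInvInvariant := by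
  have := isMulRightInvariant_of_isProbabilityMeasure μ
  have : μ.inv.IsHaarMeasure := {}
  have : IsProbabilityMeasure μ.inv := isProbabilityMeasure_map measurable_inv.aemeasurable
  exact ⟨isHaarMeasure_eq_of_isProbabilityMeasure μ.inv μ⟩

end MeasureTheory.Measure

theorem Continuous.integrable_of_compactSpace {X E : Type*} [TopologicalSpace X] [CompactSpace X]
    [MeasurableSpace X] [OpensMeasurableSpace X] [NormedAddCommGroup E] {μ : Measure X}
    [IsFiniteMeasureOnCompacts μ] {f : X → E} (hf : Continuous f) : Integrable f μ :=
  hf.integrable_of_hasCompactSupport (.of_compactSpace f)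

open Complex in
theorem Complex.sum_norm_sq_mul_norm_sq_add_I_pow_mul (x y : ℂ) :
    ∑ k : Fin 4, ‖(1 + I) / 2 * x + (1 + I) / 2 * I ^ (k : ℕ) * y‖ ^ 2 *
        ‖(1 + I) / 2 * x + (1 + I) / 2 * I ^ (k : ℕ) * y‖ ^ 2 =
      ‖x‖ ^ 2 * ‖x‖ ^ 2 + ‖y‖ ^ 2 * ‖y‖ ^ 2 + 4 * (‖x‖ ^ 2 * ‖y‖ ^ 2) := by
  simp only [Fin.sum_univ_four, Fin.val_zero, Fin.val_one, Fin.val_two, Complex.sq_norm,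
    normSq_apply]
  norm_num [pow_succ, I_sq]
  ring

namespace Matrix

variable {n : Type*} [Fintype n] [DecidableEq n]

instance : CompactSpace (unitaryGroup n ℂ) :=
  isCompact_iff_compactSpace.mp <|
    (isCompact_univ_pi fun _ => isCompact_univ_pi fun _ => isCompact_closedBall (0 : ℂ) 1)
      |>.of_isClosed_subset (isClosed_unitary : IsClosed (unitaryGroup n ℂ : Set (Matrix n n ℂ)))
        fun U hU i _ j _ => by simpa using entry_norm_bound_of_unitary hU i j

instance : BorelSpace (unitaryGroup n ℂ) := ⟨rfl⟩

@[fun_prop]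
theorem UnitaryGroup.continuous_apply (i j : n) :
    Continuous fun U : unitaryGroup n ℂ => (U : Matrix n n ℂ) i j :=
  (continuous_apply_apply i j).comp continuous_subtype_val

theorem UnitaryGroup.sum_norm_sq_apply_left (U : unitaryGroup n ℂ) (j : n) :
    ∑ i, ‖(U : Matrix n n ℂ) i j‖ ^ 2 = 1 := by
  have h := congr_fun (congr_fun (mem_unitaryGroup_iff'.mp U.2) j) j
  simp only [Matrix.mul_apply, Matrix.star_apply, RCLike.star_def, Complex.conj_mul',
    Matrix.one_apply_eq] at h
  exact_mod_cast h

/-- For `p ≠ q`, the matrix `!![c, s; -star s, star c]` on the coordinates `p, q`, and the identity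
elsewhere. -/
noncomputable def givens (p q : n) (c s : ℂ) : Matrix n n ℂ :=
  1 + single p p (c - 1) + single p q s + single q p (-star s) + single q q (star c - 1)

section Givens

variable {p q : n} {c s : ℂ}

theorem givens_mem_unitaryGroup (hpq : p ≠ q) (h : ‖c‖ ^ 2 + ‖s‖ ^ 2 = 1) :
    givens p q c s ∈ unitaryGroup n ℂ := by
  replace h : star c * c + star s * s = 1 := by
    simp only [RCLike.star_def, Complex.conj_mul']
    exact_mod_cast h
  rw [mem_unitaryGroup_iff', star_eq_conjTranspose]
  simp only [givens, conjTranspose_add, conjTranspose_one, conjTranspose_single, Matrix.mul_add,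
    Matrix.add_mul, single_mul_single_same, Matrix.one_mul, Matrix.mul_one,
    single_mul_single_of_ne _ _ _ _ hpq, single_mul_single_of_ne _ _ _ _ hpq.symm, add_zero]
  ext i k
  simp only [Matrix.add_apply, single_apply, one_apply]
  by_cases hip : p = i <;> by_cases hiq : q = i <;> by_cases hkp : p = k <;>
    by_cases hkq : q = k <;> subst_vars <;> simp_all <;> first | ring1 | linear_combination h

theorem givens_mul_apply_left (hpq : p ≠ q) (U : Matrix n n ℂ) (j : n) :
    (givens p q c s * U) p j = c * U p j + s * U q j := by
  simp only [givens, Matrix.add_mul, Matrix.one_mul, Matrix.add_apply, single_mul_apply_same,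
    single_mul_apply_of_ne _ _ _ _ _ hpq, add_zero]
  ring

end Givens

noncomputable def columnMoment (μ : Measure (unitaryGroup n ℂ)) (j a b : n) : ℝ :=
  ∫ U, ‖(U : Matrix n n ℂ) a j‖ ^ 2 * ‖(U : Matrix n n ℂ) b j‖ ^ 2 ∂μ

theorem columnMoment_comm (μ : Measure (unitaryGroup n ℂ)) (j a b : n) :
    columnMoment μ j a b = columnMoment μ j b a := by
  simp only [columnMoment, mul_comm]

section Moments

variable (μ : Measure (unitaryGroup n ℂ)) (j : n) {p q : n}

theorem integrable_norm_sq_mul_norm_sq [IsFiniteMeasure μ] (a b : n) :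
    Integrable (fun U : unitaryGroup n ℂ => ‖(U : Matrix n n ℂ) a j‖ ^ 2 *
      ‖(U : Matrix n n ℂ) b j‖ ^ 2) μ :=
  (by fun_prop : Continuous _).integrable_of_compactSpace

theorem sum_columnMoment [IsProbabilityMeasure μ] : ∑ a, ∑ b, columnMoment μ j a b = 1 := by
  have hint (a : n) := integrable_finsetSum Finset.univ fun b _ =>
    integrable_norm_sq_mul_norm_sq μ j a b
  simp only [columnMoment]
  simp_rw [← integral_finsetSum _ fun b _ => integrable_norm_sq_mul_norm_sq μ j _ b]
  rw [← integral_finsetSum _ fun a _ => hint a]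
  simp [← Finset.sum_mul_sum, UnitaryGroup.sum_norm_sq_apply_left]

theorem integral_givens_row_eq_columnMoment [μ.IsMulLeftInvariant] (hpq : p ≠ q) {c s : ℂ}
    (h : ‖c‖ ^ 2 + ‖s‖ ^ 2 = 1) :
    ∫ U : unitaryGroup n ℂ, ‖c * (U : Matrix n n ℂ) p j + s * (U : Matrix n n ℂ) q j‖ ^ 2 *
      ‖c * (U : Matrix n n ℂ) p j + s * (U : Matrix n n ℂ) q j‖ ^ 2 ∂μ = columnMoment μ j p p := by
  symm
  rw [columnMoment, ← integral_mul_left_eq_self _ ⟨givens p q c s, givens_mem_unitaryGroup hpq h⟩]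
  simp only [UnitaryGroup.mul_val, givens_mul_apply_left hpq]

variable [μ.IsMulLeftInvariant] [IsProbabilityMeasure μ]

open Complex in
theorem three_mul_columnMoment_self (hpq : p ≠ q) :
    3 * columnMoment μ j p p = columnMoment μ j q q + 4 * columnMoment μ j p q := by
  -- `‖(1 + I) / 2‖ ^ 2 = 1 / 2`: a rotation with entries of modulus `1 / √2`, free of square roots.
  have hrot (k : Fin 4) := integral_givens_row_eq_columnMoment μ j hpq (c := (1 + I) / 2)
    (s := (1 + I) / 2 * I ^ (k : ℕ)) (by
      simp only [norm_mul, norm_pow, norm_I, one_pow, mul_one, Complex.sq_norm, normSq_apply]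
      norm_num)
  have hint := integrable_norm_sq_mul_norm_sq μ j
  have h4 : 4 * columnMoment μ j p p =
      columnMoment μ j p p + columnMoment μ j q q + 4 * columnMoment μ j p q := calc
    _ = ∫ U : unitaryGroup n ℂ, ∑ k : Fin 4,
          ‖(1 + I) / 2 * (U : Matrix n n ℂ) p j +
            (1 + I) / 2 * I ^ (k : ℕ) * (U : Matrix n n ℂ) q j‖ ^ 2 *
          ‖(1 + I) / 2 * (U : Matrix n n ℂ) p j +
            (1 + I) / 2 * I ^ (k : ℕ) * (U : Matrix n n ℂ) q j‖ ^ 2 ∂μ := by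
      rw [integral_finsetSum _ fun k _ => (by fun_prop : Continuous _).integrable_of_compactSpace]
      simp [hrot]
    _ = _ := by
      simp_rw [sum_norm_sq_mul_norm_sq_add_I_pow_mul]
      rw [integral_add ((hint p p).fun_add (hint q q)) ((hint p q).const_mul 4),
        integral_add (hint p p) (hint q q), integral_const_mul]
      rfl
  linarith

theorem columnMoment_self_eq (a b : n) : columnMoment μ j a a = columnMoment μ j b b := by
  rcases eq_or_ne a b with rfl | hab
  · rfl
  · linarith [three_mul_columnMoment_self μ j hab, three_mul_columnMoment_self μ j hab.symm,
      columnMoment_comm μ j a b]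

theorem columnMoment_self_eq_two_mul {a b : n} (hab : a ≠ b) :
    columnMoment μ j a a = 2 * columnMoment μ j a b := by
  linarith [three_mul_columnMoment_self μ j hab, columnMoment_self_eq μ j a b]

theorem columnMoment_eq_ite_mul (hpq : p ≠ q) (a b : n) :
    columnMoment μ j a b = (1 + if a = b then 1 else 0) * columnMoment μ j p q := by
  split_ifs with hab
  · subst hab
    linarith [columnMoment_self_eq μ j a p, columnMoment_self_eq_two_mul μ j hpq]
  · linarith [columnMoment_self_eq μ j a p, columnMoment_self_eq_two_mul μ j hab,
      columnMoment_self_eq_two_mul μ j hpq]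

theorem columnMoment_of_ne (hpq : p ≠ q) :
    columnMoment μ j p q = 1 / (Fintype.card n * (Fintype.card n + 1)) := by
  refine eq_one_div_of_mul_eq_one_right ?_
  calc (Fintype.card n * (Fintype.card n + 1) : ℝ) * columnMoment μ j p q
      = ∑ a, ∑ b, (1 + if a = b then 1 else 0) * columnMoment μ j p q := by
        simp only [add_mul, one_mul, ite_mul, zero_mul, Finset.sum_add_distrib, Finset.sum_const,
          Finset.card_univ, nsmul_eq_mul, Finset.sum_ite_eq, Finset.mem_univ, if_true]
        ring
    _ = ∑ a, ∑ b, columnMoment μ j a b :=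
        Finset.sum_congr rfl fun a _ => Finset.sum_congr rfl fun b _ =>
          (columnMoment_eq_ite_mul μ j hpq a b).symm
    _ = 1 := sum_columnMoment μ j

end Moments

theorem integral_row_eq_columnMoment (μ : Measure (unitaryGroup n ℂ)) [μ.IsHaarMeasure]
    [IsProbabilityMeasure μ] (i j₁ j₂ : n) :
    ∫ U, ‖(U : Matrix n n ℂ) i j₁‖ ^ 2 * ‖(U : Matrix n n ℂ) i j₂‖ ^ 2 ∂μ =
      columnMoment μ i j₁ j₂ := by
  have := μ.isInvInvariant_of_isProbabilityMeasure
  rw [columnMoment, ← integral_inv_eq_self]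
  simp [Matrix.star_apply]

end Matrix

theorem fourth_moment_haar_unitary_same_row_or_column_general
    (d : ℕ)
    (μH : Measure (Matrix.unitaryGroup (Fin d) ℂ))
    [μH.IsHaarMeasure] [IsProbabilityMeasure μH] :
    (∀ (i j₁ j₂ : Fin d), j₁ ≠ j₂ →
      ∫ U : Matrix.unitaryGroup (Fin d) ℂ,
          ‖(U : Matrix (Fin d) (Fin d) ℂ) i j₁‖ ^ 2 *
            ‖(U : Matrix (Fin d) (Fin d) ℂ) i j₂‖ ^ 2 ∂μH
        = 1 / ((d : ℝ) * ((d : ℝ) + 1))) ∧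
    (∀ (j i₁ i₂ : Fin d), i₁ ≠ i₂ →
      ∫ U : Matrix.unitaryGroup (Fin d) ℂ,
          ‖(U : Matrix (Fin d) (Fin d) ℂ) i₁ j‖ ^ 2 *
            ‖(U : Matrix (Fin d) (Fin d) ℂ) i₂ j‖ ^ 2 ∂μH
        = 1 / ((d : ℝ) * ((d : ℝ) + 1))) := by
  have hcol (j : Fin d) {i₁ i₂ : Fin d} (h : i₁ ≠ i₂) :
      columnMoment μH j i₁ i₂ = 1 / ((d : ℝ) * ((d : ℝ) + 1)) := by
    rw [columnMoment_of_ne μH j h, Fintype.card_fin]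
  exact ⟨fun i j₁ j₂ h => (integral_row_eq_columnMoment μH i j₁ j₂).trans (hcol i h),
    fun j i₁ i₂ h => hcol j h⟩

/-- **Fourth-moment Haar integral, same row or same column.** For `d ≥ 2`:
for a fixed row `i` and distinct columns `j₁ ≠ j₂`,
`∫ |U_{i j₁}|² |U_{i j₂}|² dμ_H(U) = 1/(d(d+1))`, and likewise for a fixed column `j`
and distinct rows `i₁ ≠ i₂`, `∫ |U_{i₁ j}|² |U_{i₂ j}|² dμ_H(U) = 1/(d(d+1))`. -/
theorem fourth_moment_haar_unitary_same_row_or_column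
    (d : ℕ) (hd : 2 ≤ d)
    (μH : Measure (Matrix.unitaryGroup (Fin d) ℂ))
    [μH.IsHaarMeasure] [IsProbabilityMeasure μH] :
    (∀ (i j₁ j₂ : Fin d), j₁ ≠ j₂ →
      ∫ U : Matrix.unitaryGroup (Fin d) ℂ,
          ‖(U : Matrix (Fin d) (Fin d) ℂ) i j₁‖ ^ 2 *
            ‖(U : Matrix (Fin d) (Fin d) ℂ) i j₂‖ ^ 2 ∂μH
        = 1 / ((d : ℝ) * ((d : ℝ) + 1))) ∧
    (∀ (j i₁ i₂ : Fin d), i₁ ≠ i₂ →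
      ∫ U : Matrix.unitaryGroup (Fin d) ℂ,
          ‖(U : Matrix (Fin d) (Fin d) ℂ) i₁ j‖ ^ 2 *
            ‖(U : Matrix (Fin d) (Fin d) ℂ) i₂ j‖ ^ 2 ∂μH
        = 1 / ((d : ℝ) * ((d : ℝ) + 1))) :=
  fourth_moment_haar_unitary_same_row_or_column_general d μH
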